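/- Let o, d, n be positive integers, β > 0, and Y ∈ ℝ^{o×n}. The reduced loss L* : ℝ^{d×n} → ℝ, L*(Φ) = ‖Y − W*(Φ)Φ‖_F² + β‖W*(Φ)‖_F² with W*(Φ) = YΦᵀ(ΦΦᵀ + βI)⁻¹, is differentiable at every Φ, and its derivative at Φ in the direction Ψ ∈ ℝ^{d×n} is given by the trace inner product of Ψ with the matrix 2 W*(Φ)ᵀ (W*(Φ)Φ − Y); that is, DL*(Φ)[Ψ] = tr((2 W*(Φ)ᵀ(W*(Φ)Φ − Y))ᵀ Ψ). -/

import Mathlib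

open Matrix BigOperators

attribute [local instance] Matrix.frobeniusNormedAddCommGroup Matrix.frobeniusNormedSpace

/-- Squared Frobenius norm of a real matrix. -/
noncomputable def sqFrob {m n : ℕ} (A : Matrix (Fin m) (Fin n) ℝ) : ℝ :=
  ∑ i, ∑ j, (A i j) ^ 2

/-- The closed-form ridge solution `W*(Φ) = YΦᵀ(ΦΦᵀ + βI)⁻¹`. -/
noncomputable def Wstar {o d n : ℕ} (β : ℝ) (Y : Matrix (Fin o) (Fin n) ℝ)
    (Φ : Matrix (Fin d) (Fin n) ℝ) : Matrix (Fin o) (Fin d) ℝ :=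
  Y * Φᵀ * (Φ * Φᵀ + β • (1 : Matrix (Fin d) (Fin d) ℝ))⁻¹

/-- The reduced loss `L*(Φ) = ‖Y − W*(Φ)Φ‖_F² + β‖W*(Φ)‖_F²`. -/
noncomputable def Lstar {o d n : ℕ} (β : ℝ) (Y : Matrix (Fin o) (Fin n) ℝ)
    (Φ : Matrix (Fin d) (Fin n) ℝ) : ℝ :=
  sqFrob (Y - Wstar β Y Φ * Φ) + β * sqFrob (Wstar β Y Φ)

/-!
Write `L*(Φ) = f(W*(Φ), Φ)` with `f(W, Φ) = ‖Y − WΦ‖_F² + β‖W‖_F²`. Since `W*(Φ)` minimises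
`f(·, Φ)`, the normal equation `(W*Φ − Y)Φᵀ + βW* = 0` says that the partial derivative of `f` in
`W` vanishes at `W*`. By the chain rule the variation of `W*` therefore drops out (envelope
theorem), and only the partial derivative in `Φ`, namely `Ψ ↦ 2 tr((W*Φ − Y)ᵀ W*Ψ)`, survives.
Differentiability of `W*` comes from that of matrix products and of inversion at the positive
definite matrix `ΦΦᵀ + βI`.
-/

section

-- `Matrix` also carries the product topology; erasing it leaves the Frobenius one as the only
-- instance, so that continuous linear maps into matrix spaces have a single type.
attribute [-instance] instTopologicalSpaceMatrix Matrix.instUniformSpace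

namespace Matrix

section RCLike

variable {𝕜 : Type*} [RCLike 𝕜] {l m n : Type*} [Fintype l] [Fintype m] [Fintype n]
  {X : Type*} [NormedAddCommGroup X] [NormedSpace 𝕜 X]

theorem isBoundedBilinearMap_mul :
    IsBoundedBilinearMap 𝕜 fun p : Matrix l m 𝕜 × Matrix m n 𝕜 => p.1 * p.2 where
  add_left := Matrix.add_mul
  smul_left c A B := Matrix.smul_mul c A B
  add_right := Matrix.mul_add
  smul_right c A B := Matrix.mul_smul A c B
  bound := ⟨1, one_pos, fun A B => by simpa using frobenius_norm_mul A B⟩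

noncomputable def mulCLM : Matrix l m 𝕜 →L[𝕜] Matrix m n 𝕜 →L[𝕜] Matrix l n 𝕜 :=
  isBoundedBilinearMap_mul.toContinuousLinearMap

@[simp]
theorem mulCLM_apply (A : Matrix l m 𝕜) (B : Matrix m n 𝕜) : mulCLM A B = A * B := rfl

noncomputable def transposeCLM : Matrix m n 𝕜 →L[𝕜] Matrix n m 𝕜 :=
  (transposeLinearEquiv m n 𝕜 𝕜).toLinearMap.toContinuousLinearMap

noncomputable def traceCLM : Matrix n n 𝕜 →L[𝕜] 𝕜 :=
  (traceLinearMap n 𝕜 𝕜).toContinuousLinearMap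

theorem hasFDerivAt_transpose (A : Matrix m n 𝕜) :
    HasFDerivAt (fun B : Matrix m n 𝕜 => Bᵀ) (transposeCLM (𝕜 := 𝕜)) A :=
  (transposeCLM (𝕜 := 𝕜) (m := m) (n := n)).hasFDerivAt

theorem _root_.HasFDerivAt.matrix_mul {f : X → Matrix l m 𝕜} {g : X → Matrix m n 𝕜}
    {f' : X →L[𝕜] Matrix l m 𝕜} {g' : X →L[𝕜] Matrix m n 𝕜} {x : X}
    (hf : HasFDerivAt f f' x) (hg : HasFDerivAt g g' x) :
    HasFDerivAt (fun y => f y * g y) ((mulCLM (f x)).comp g' + (mulCLM.flip (g x)).comp f') x :=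
  mulCLM.hasFDerivAt_of_bilinear hf hg

theorem _root_.DifferentiableAt.matrix_mul {f : X → Matrix l m 𝕜} {g : X → Matrix m n 𝕜} {x : X}
    (hf : DifferentiableAt 𝕜 f x) (hg : DifferentiableAt 𝕜 g x) :
    DifferentiableAt 𝕜 (fun y => f y * g y) x :=
  (HasFDerivAt.matrix_mul hf.hasFDerivAt hg.hasFDerivAt).differentiableAt

section Inverse

attribute [local instance] Matrix.frobeniusNormedRing Matrix.frobeniusNormedAlgebra

theorem differentiableAt_inv [DecidableEq n] {A : Matrix n n 𝕜} (hA : IsUnit A) :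
    DifferentiableAt 𝕜 (fun B : Matrix n n 𝕜 => B⁻¹) A := by
  simp only [nonsing_inv_eq_ringInverse]
  exact differentiableAt_inverse hA

end Inverse

end RCLike

section Real

variable {l m n : Type*} [Fintype l] [Fintype m] [Fintype n]

noncomputable def frobInner : Matrix m n ℝ →L[ℝ] Matrix m n ℝ →L[ℝ] ℝ :=
  (ContinuousLinearMap.compL ℝ _ _ _ traceCLM).comp (mulCLM.comp transposeCLM)

theorem frobInner_apply (M H : Matrix m n ℝ) : frobInner M H = trace (Mᵀ * H) := rfl

theorem frobInner_comm (M H : Matrix m n ℝ) : frobInner M H = frobInner H M := by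
  rw [frobInner_apply, frobInner_apply, ← trace_transpose, transpose_mul, transpose_transpose]

theorem frobInner_mul_left (R : Matrix l n ℝ) (W : Matrix l m ℝ) (Ψ : Matrix m n ℝ) :
    frobInner R (W * Ψ) = frobInner (Wᵀ * R) Ψ := by
  rw [frobInner_apply, frobInner_apply, transpose_mul, transpose_transpose, Matrix.mul_assoc]

theorem frobInner_mul_right (R : Matrix l n ℝ) (D : Matrix l m ℝ) (Φ : Matrix m n ℝ) :
    frobInner R (D * Φ) = frobInner (R * Φᵀ) D := by
  rw [frobInner_apply, frobInner_apply, transpose_mul, transpose_transpose, ← Matrix.mul_assoc,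
    trace_mul_comm, Matrix.mul_assoc]

theorem hasFDerivAt_frobInner_self (M : Matrix m n ℝ) :
    HasFDerivAt (fun A => frobInner A A) ((2 : ℝ) • frobInner M) M := by
  refine (frobInner.hasFDerivAt_of_bilinear (hasFDerivAt_id M) (hasFDerivAt_id M)).congr_fderiv
    (ContinuousLinearMap.ext fun H => ?_)
  simp [frobInner_comm H M, two_mul]

theorem posDef_mul_transpose_add_smul_one [DecidableEq m] (Φ : Matrix m n ℝ) {β : ℝ}
    (hβ : 0 < β) : (Φ * Φᵀ + β • (1 : Matrix m m ℝ)).PosDef :=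
  PosDef.posSemidef_add (by simpa using posSemidef_self_mul_conjTranspose Φ) (PosDef.one.smul hβ)

end Real

end Matrix

open Matrix

theorem sqFrob_eq_frobInner_self {m n : ℕ} (A : Matrix (Fin m) (Fin n) ℝ) :
    sqFrob A = frobInner A A := by
  simp only [sqFrob, frobInner_apply, trace, diag, mul_apply, transpose_apply, sq]
  exact Finset.sum_comm

theorem hasFDerivAt_sqFrob {m n : ℕ} (M : Matrix (Fin m) (Fin n) ℝ) :
    HasFDerivAt sqFrob ((2 : ℝ) • frobInner M) M := by
  simpa only [funext sqFrob_eq_frobInner_self] using hasFDerivAt_frobInner_self M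

variable {o d n : ℕ} {β : ℝ} (hβ : 0 < β) (Y : Matrix (Fin o) (Fin n) ℝ)
  (Φ : Matrix (Fin d) (Fin n) ℝ)
include hβ

theorem differentiableAt_Wstar : DifferentiableAt ℝ (Wstar β Y) Φ := by
  have hT := (hasFDerivAt_transpose Φ).differentiableAt
  have hG : DifferentiableAt ℝ (fun P : Matrix (Fin d) (Fin n) ℝ => P * Pᵀ + β • 1) Φ :=
    (differentiableAt_id.matrix_mul hT).add_const _
  exact ((differentiableAt_const Y).matrix_mul hT).matrix_mul
    ((differentiableAt_inv (posDef_mul_transpose_add_smul_one Φ hβ).isUnit).comp Φ hG)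

theorem Wstar_normal_equation : (Wstar β Y Φ * Φ - Y) * Φᵀ + β • Wstar β Y Φ = 0 := by
  have hW : Wstar β Y Φ * (Φ * Φᵀ + β • 1) = Y * Φᵀ := by
    rw [Wstar, Matrix.mul_assoc, nonsing_inv_mul _
      ((isUnit_iff_isUnit_det _).mp (posDef_mul_transpose_add_smul_one Φ hβ).isUnit),
      Matrix.mul_one]
  rw [Matrix.sub_mul, Matrix.mul_assoc, ← hW, Matrix.mul_add, Matrix.mul_smul, Matrix.mul_one]
  abel

theorem hasFDerivAt_Lstar :
    HasFDerivAt (Lstar β Y) (frobInner ((2 : ℝ) • ((Wstar β Y Φ)ᵀ * (Wstar β Y Φ * Φ - Y)))) Φ := by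
  have hW := (differentiableAt_Wstar hβ Y Φ).hasFDerivAt
  have hL := ((hasFDerivAt_sqFrob _).comp Φ
    ((HasFDerivAt.matrix_mul hW (hasFDerivAt_id Φ)).const_sub Y)).add
    (((hasFDerivAt_sqFrob (Wstar β Y Φ)).comp Φ hW).const_mul β)
  refine hL.congr_fderiv (ContinuousLinearMap.ext fun Ψ => ?_)
  set W := Wstar β Y Φ
  simp only [_root_.add_apply, ContinuousLinearMap.comp_apply, _root_.neg_apply,
    _root_.smul_apply, ContinuousLinearMap.id_apply, ContinuousLinearMap.flip_apply,
    mulCLM_apply, id_eq, smul_eq_mul]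
  generalize fderiv ℝ (Wstar β Y) Φ Ψ = D
  calc 2 * frobInner (Y - W * Φ) (-(W * Ψ + D * Φ)) + β * (2 * frobInner W D)
      = 2 * frobInner (W * Φ - Y) (W * Ψ) + 2 * frobInner ((W * Φ - Y) * Φᵀ + β • W) D := by
        rw [← neg_sub, map_neg, map_neg, _root_.neg_apply, neg_neg, map_add,
          frobInner_mul_right _ D Φ, map_add, _root_.add_apply, map_smul, _root_.smul_apply,
          smul_eq_mul]
        ring
    _ = frobInner ((2 : ℝ) • (Wᵀ * (W * Φ - Y))) Ψ := by
        rw [Wstar_normal_equation hβ Y Φ, map_zero, _root_.zero_apply, map_smul,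
          _root_.smul_apply, smul_eq_mul, frobInner_mul_left]
        ring

end

theorem stmt_4_general (o d n : ℕ)
    (β : ℝ) (hβ : 0 < β)
    (Y : Matrix (Fin o) (Fin n) ℝ) (Φ : Matrix (Fin d) (Fin n) ℝ) :
    DifferentiableAt ℝ (Lstar β Y) Φ ∧
    ∀ Ψ : Matrix (Fin d) (Fin n) ℝ,
      fderiv ℝ (Lstar β Y) Φ Ψ =
        trace (((2 : ℝ) • ((Wstar β Y Φ)ᵀ * (Wstar β Y Φ * Φ - Y)))ᵀ * Ψ) := by
  have h := hasFDerivAt_Lstar hβ Y Φ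
  exact ⟨h.differentiableAt, fun Ψ => DFunLike.congr_fun h.fderiv Ψ⟩

theorem stmt_4 (o d n : ℕ) (ho : 0 < o) (hd : 0 < d) (hn : 0 < n)
    (β : ℝ) (hβ : 0 < β)
    (Y : Matrix (Fin o) (Fin n) ℝ) (Φ : Matrix (Fin d) (Fin n) ℝ) :
    DifferentiableAt ℝ (Lstar β Y) Φ ∧
    ∀ Ψ : Matrix (Fin d) (Fin n) ℝ,
      fderiv ℝ (Lstar β Y) Φ Ψ =
        trace (((2 : ℝ) • ((Wstar β Y Φ)ᵀ * (Wstar β Y Φ * Φ - Y)))ᵀ * Ψ) :=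
  stmt_4_general o d n β hβ Y Φ
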